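/- arXiv:2203.09285 — 5 statements merged into one kernel-verified Lean document; each statement's English description precedes it below -/
import Mathlib

section
/- Let M ⊆ ℝⁿ be a convex polytope (intersection of finitely many closed half-spaces, assumed compact) and γ : [0,r) → M a C¹-map with r > 0. Then there exists ε > 0 such that γ(0) + t·γ'(0) ∈ M for all t ∈ [0, ε]. -/
/-!
Constraints inactive at `γ 0` stay strict for small `t` by continuity. For an active constraint
`l (γ 0) = a l`, the function `t ↦ l (γ t)` is maximal at `t = 0` on `[0, r)`, so its one-sided
derivative `l (γ' 0)` is `≤ 0`, and the ray `t ↦ γ 0 + t • γ' 0` stays in that half-space.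
-/

open Set Filter Topology

theorem IsMaxOn.hasDerivWithinAt_Ico_nonpos {f : ℝ → ℝ} {f' b r : ℝ} (hbr : b < r)
    (hmax : IsMaxOn f (Ico b r) b) (hf : HasDerivWithinAt f f' (Ico b r) b) : f' ≤ 0 := by
  have hcone : r - b ∈ posTangentConeAt (Ico b r) b :=
    sub_mem_posTangentConeAt_of_openSegment_subset <| by
      rw [openSegment_eq_Ioo hbr]; exact Ioo_subset_Ico_self
  have := hmax.localize.hasFDerivWithinAt_nonpos hf.hasFDerivWithinAt hcone
  simp only [ContinuousLinearMap.toSpanSingleton_apply, smul_eq_mul] at this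
  exact nonpos_of_mul_nonpos_right this (sub_pos.2 hbr)

theorem LinearMap.apply_nonpos_of_hasDerivWithinAt_of_isMaxOn {E : Type*} [NormedAddCommGroup E]
    [NormedSpace ℝ E] [FiniteDimensional ℝ E] (l : E →ₗ[ℝ] ℝ) {γ : ℝ → E} {v : E} {r : ℝ}
    (hr : 0 < r) (hγ : HasDerivWithinAt γ v (Ico 0 r) 0)
    (hmax : IsMaxOn (fun t => l (γ t)) (Ico 0 r) 0) : l v ≤ 0 :=
  hmax.hasDerivWithinAt_Ico_nonpos hr <|
    (LinearMap.toContinuousLinearMap l).hasFDerivAt.comp_hasDerivWithinAt 0 hγ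

theorem eventually_nhdsGE_add_mul_le {p q c : ℝ} (hp : p ≤ c) (hq : p = c → q ≤ 0) :
    ∀ᶠ t in 𝓝[≥] (0 : ℝ), p + t * q ≤ c := by
  rcases hp.lt_or_eq with hlt | rfl
  · have hcont : Continuous fun t : ℝ => p + t * q := by fun_prop
    have hev : ∀ᶠ t in 𝓝 0, p + t * q < c :=
      hcont.continuousAt.eventually_lt continuousAt_const (by simpa using hlt)
    exact (hev.filter_mono nhdsWithin_le_nhds).mono fun _ => le_of_lt
  · filter_upwards [self_mem_nhdsWithin] with t (ht : 0 ≤ t)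
    nlinarith [hq rfl]

theorem LinearMap.eventually_nhdsGE_forall_add_smul_le {E : Type*} [AddCommGroup E] [Module ℝ E]
    (Λ : Finset (E →ₗ[ℝ] ℝ)) (a : (E →ₗ[ℝ] ℝ) → ℝ) {x v : E} (hx : ∀ l ∈ Λ, l x ≤ a l)
    (hv : ∀ l ∈ Λ, l x = a l → l v ≤ 0) :
    ∀ᶠ t in 𝓝[≥] (0 : ℝ), ∀ l ∈ Λ, l (x + t • v) ≤ a l := by
  rw [eventually_all_finset]
  intro l hl
  simpa only [map_add, map_smul, smul_eq_mul] using
    eventually_nhdsGE_add_mul_le (hx l hl) (hv l hl)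

theorem derivative_points_into_polytope_general {n : ℕ}
    (Λ : Finset ((Fin n → ℝ) →ₗ[ℝ] ℝ)) (a : ((Fin n → ℝ) →ₗ[ℝ] ℝ) → ℝ)
    (M : Set (Fin n → ℝ)) (hM : M = {x | ∀ l ∈ Λ, l x ≤ a l})
    (r : ℝ) (hr : 0 < r) (γ γ' : ℝ → (Fin n → ℝ))
    (hmaps : ∀ t ∈ Ico (0 : ℝ) r, γ t ∈ M)
    (hderiv : ∀ t ∈ Ico (0 : ℝ) r, HasDerivWithinAt γ (γ' t) (Ico 0 r) t) :
    ∃ ε > (0 : ℝ), ∀ t ∈ Icc (0 : ℝ) ε, γ 0 + t • γ' 0 ∈ M := by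
  subst hM
  have h0 : (0 : ℝ) ∈ Ico 0 r := ⟨le_rfl, hr⟩
  have hactive : ∀ l ∈ Λ, l (γ 0) = a l → l (γ' 0) ≤ 0 := fun l hl hact =>
    l.apply_nonpos_of_hasDerivWithinAt_of_isMaxOn hr (hderiv 0 h0) fun t ht =>
      (hmaps t ht l hl).trans hact.ge
  obtain ⟨ε, hε, hsub⟩ := mem_nhdsGE_iff_exists_Icc_subset.mp <|
    LinearMap.eventually_nhdsGE_forall_add_smul_le Λ a (hmaps 0 h0) hactive
  exact ⟨ε, hε, hsub⟩

/-- Let `M ⊆ ℝⁿ` be a convex polytope (a compact intersection of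
finitely many closed half-spaces) and `γ : [0,r) → M` a `C¹`-map with `r > 0`.
Then there is `ε > 0` with `γ(0) + t • γ'(0) ∈ M` for all `t ∈ [0, ε]`. -/
theorem derivative_points_into_polytope {n : ℕ}
    (Λ : Finset ((Fin n → ℝ) →ₗ[ℝ] ℝ)) (a : ((Fin n → ℝ) →ₗ[ℝ] ℝ) → ℝ)
    (M : Set (Fin n → ℝ)) (hM : M = {x | ∀ l ∈ Λ, l x ≤ a l}) (hMc : IsCompact M)
    (r : ℝ) (hr : 0 < r) (γ γ' : ℝ → (Fin n → ℝ))
    (hmaps : ∀ t ∈ Ico (0 : ℝ) r, γ t ∈ M)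
    (hderiv : ∀ t ∈ Ico (0 : ℝ) r, HasDerivWithinAt γ (γ' t) (Ico 0 r) t)
    (hcont : ContinuousOn γ' (Ico 0 r)) :
    ∃ ε > (0 : ℝ), ∀ t ∈ Icc (0 : ℝ) ε, γ 0 + t • γ' 0 ∈ M :=
  derivative_points_into_polytope_general Λ a M hM r hr γ γ' hmaps hderiv
end

section
/- Let M, N ⊆ ℝⁿ be convex polytopes with nonempty interior, U ⊆ M and V ⊆ N relatively open, and φ : U → V a C¹-map (i.e., continuous with a continuous extension of the differential from the interior). For x ∈ U, let E(x) = span(M(x) − x) and F(y) = span(N(y) − y), where M(x), N(y) denote the smallest faces containing x, y. Then φ'(x)(E(x)) ⊆ F(φ(x)). -/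
open Set

/-- A convex polytope: the convex hull of a finite set. -/
def IsPolytope (n : ℕ) (M : Set (Fin n → ℝ)) : Prop :=
  ∃ S : Finset (Fin n → ℝ), M = convexHull ℝ (S : Set (Fin n → ℝ))

/-- A face of `M`: a convex extreme subset of `M`. -/
def IsFaceOf (n : ℕ) (M F : Set (Fin n → ℝ)) : Prop :=
  Convex ℝ F ∧ IsExtreme ℝ M F

/-- The smallest face of `M` containing `x`: the intersection of all faces containing `x`. -/
def smallestFace (n : ℕ) (M : Set (Fin n → ℝ)) (x : Fin n → ℝ) : Set (Fin n → ℝ) :=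
  ⋂₀ {F | IsFaceOf n M F ∧ x ∈ F}

/-- `E(x) := span_ℝ (M(x) - x)`, where `M(x)` is the smallest face of `M` containing `x`. -/
def spanAt (n : ℕ) (M : Set (Fin n → ℝ)) (x : Fin n → ℝ) : Submodule ℝ (Fin n → ℝ) :=
  Submodule.span ℝ ((fun y => y - x) '' smallestFace n M x)

/-- dimension of a set: the dimension of its affine hull. -/
noncomputable def setDim (n : ℕ) (F : Set (Fin n → ℝ)) : ℕ :=
  Module.finrank ℝ (vectorSpan ℝ F)

/-- The stratum `∂_i(M)` of points of index `i`, i.e. whose smallest containing face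
has dimension `n - i`. -/
def stratum (n : ℕ) (M : Set (Fin n → ℝ)) (i : ℕ) : Set (Fin n → ℝ) :=
  {x ∈ M | setDim n (smallestFace n M x) = n - i}

/-!
For convex `M ∋ x` let `C_M(x)` be the cone generated by `M - x`. The span `E(x)` lies in the
lineality space `C_M(x) ∩ -C_M(x)`: the points `z ∈ M` with `x - z ∈ C_M(x)` form a face
containing `x`, hence contain `M(x)`. Since `φ'` extends continuously from the interior, `φ` is
differentiable within `U` at every point of `U`, so `φ'(x)` maps `C_M(x)` into the closure of
`C_N(φ x)`, which is closed because `N` is a polytope (Carathéodory's theorem for cones).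
Finally, if `w` and `-w` both lie in `C_N(y)`, then `y` lies in an open segment of `N` in
direction `w`, and extremality of `N(y)` puts `w` into `F(y)`.
-/

open Filter Topology

namespace PointedCone

section Algebraic

variable {E : Type*} [AddCommGroup E] [Module ℝ E]

lemma mem_hull_finset_iff {s : Finset E} {x : E} :
    x ∈ hull ℝ (s : Set E) ↔ ∃ f : E → ℝ, (∀ a ∈ s, 0 ≤ f a) ∧ ∑ a ∈ s, f a • a = x := by
  constructor
  · intro hx
    obtain ⟨f, -, rfl⟩ := Submodule.mem_span_finset.1 hx
    exact ⟨fun a => f a, fun a _ => (f a).2, rfl⟩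
  · rintro ⟨f, hf, rfl⟩
    exact Submodule.sum_mem _ fun a ha => smul_mem _ (hf a ha) (subset_hull ha)

/-- Carathéodory's theorem for cones. -/
lemma exists_mem_hull_erase_of_not_linearIndepOn [DecidableEq E] {s : Finset E}
    (hs : ¬LinearIndepOn ℝ id (s : Set E)) {x : E} (hx : x ∈ hull ℝ (s : Set E)) :
    ∃ a ∈ s, x ∈ hull ℝ (s.erase a : Set E) := by
  obtain ⟨f, hf, rfl⟩ := mem_hull_finset_iff.1 hx
  obtain ⟨g, hg, hg0⟩ := not_linearIndepOn_finset_iff.1 hs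
  simp only [id] at hg
  wlog hpos : ∃ a ∈ s, 0 < g a generalizing g
  · refine this (-g) (by simpa using hg0) (by simp [hg]) ?_
    push Not at hpos
    obtain ⟨a, ha, hga⟩ := hg0
    exact ⟨a, ha, by simpa using lt_of_le_of_ne (hpos a ha) hga⟩
  -- Subtract from `f` the largest multiple `t` of the relation `g` that keeps all coefficients
  -- nonnegative; the coefficient of the minimizing generator `a` then vanishes.
  obtain ⟨a, ha, hmin⟩ := (s.filter (0 < g ·)).exists_min_image (fun b => f b / g b)
    (by obtain ⟨b, hb, hgb⟩ := hpos; exact ⟨b, Finset.mem_filter.2 ⟨hb, hgb⟩⟩)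
  obtain ⟨has, hga⟩ := Finset.mem_filter.1 ha
  set t := f a / g a
  have hk : ∀ b ∈ s, 0 ≤ f b - t * g b := by
    intro b hb
    rcases le_or_gt (g b) 0 with hgb | hgb
    · nlinarith [hf b hb, div_nonneg (hf a has) hga.le]
    · linarith [(le_div_iff₀ hgb).1 (hmin b (Finset.mem_filter.2 ⟨hb, hgb⟩))]
  refine ⟨a, has, mem_hull_finset_iff.2 ⟨fun b => f b - t * g b,
    fun b hb => hk b (Finset.mem_of_mem_erase hb), ?_⟩⟩
  rw [Finset.sum_erase _ (by simp [t, hga.ne']), ← sub_zero (∑ b ∈ s, f b • b), ← smul_zero t,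
    ← hg, Finset.smul_sum, ← Finset.sum_sub_distrib]
  simp only [sub_smul, mul_smul]

end Algebraic

variable {E : Type*} [AddCommGroup E] [Module ℝ E] [TopologicalSpace E] [IsTopologicalAddGroup E]
  [ContinuousSMul ℝ E] [T2Space E]

lemma isClosed_hull_of_linearIndepOn {s : Finset E} (hs : LinearIndepOn ℝ id (s : Set E)) :
    IsClosed (hull ℝ (s : Set E) : Set E) := by
  set L := Fintype.linearCombination ℝ ((↑) : s → E)
  have hL : Topology.IsClosedEmbedding L :=
    LinearMap.isClosedEmbedding_of_injective
      (LinearMap.ker_eq_bot.2 hs.fintypeLinearCombination_injective)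
  have : (hull ℝ (s : Set E) : Set E) = L '' Ici 0 := by
    ext x
    simp only [SetLike.mem_coe, Submodule.mem_span_finset', mem_image, mem_Ici, L,
      Fintype.linearCombination_apply]
    constructor
    · rintro ⟨f, rfl⟩
      exact ⟨fun a => f a, fun a => (f a).2, rfl⟩
    · rintro ⟨μ, hμ, rfl⟩
      exact ⟨fun a => ⟨μ a, hμ a⟩, rfl⟩
  rw [this]
  exact hL.isClosedMap _ isClosed_Ici

theorem isClosed_hull_finset (s : Finset E) : IsClosed (hull ℝ (s : Set E) : Set E) := by
  classical
  induction s using Finset.strongInduction with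
  | _ s ih =>
  by_cases hs : LinearIndepOn ℝ id (s : Set E)
  · exact isClosed_hull_of_linearIndepOn hs
  have : (hull ℝ (s : Set E) : Set E) = ⋃ a ∈ s, hull ℝ (s.erase a : Set E) := by
    refine Subset.antisymm (fun x hx => ?_) (iUnion₂_subset fun a _ => ?_)
    · obtain ⟨a, ha, hxa⟩ := exists_mem_hull_erase_of_not_linearIndepOn hs hx
      exact mem_biUnion ha hxa
    · exact Submodule.span_mono (Finset.coe_subset.2 (s.erase_subset a))
  rw [this]
  exact s.finite_toSet.isClosed_biUnion fun a ha => ih _ (Finset.erase_ssubset ha)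

end PointedCone

def feasibleCone {E : Type*} [AddCommGroup E] [Module ℝ E] (M : Set E) (x : E) :
    PointedCone ℝ E :=
  PointedCone.hull ℝ ((· - x) '' M)

section FeasibleCone

variable {E : Type*} [AddCommGroup E] [Module ℝ E] {M : Set E} {x : E}

lemma exists_eq_smul_sub_of_mem_feasibleCone (hM : Convex ℝ M) (hx : x ∈ M) {w : E}
    (hw : w ∈ feasibleCone M x) : ∃ c : ℝ, 0 ≤ c ∧ ∃ z ∈ M, w = c • (z - x) := by
  have hconv : Convex ℝ ((· - x) '' M) := by
    simpa only [neg_add_eq_sub] using hM.translate (-x)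
  have hle : feasibleCone M x ≤ (ConvexCone.hull ℝ ((· - x) '' M)).toPointedCone
      (ConvexCone.subset_hull ⟨x, hx, sub_self x⟩) :=
    Submodule.span_le.2 ConvexCone.subset_hull
  obtain ⟨c, hc, _, ⟨z, hz, rfl⟩, rfl⟩ := (ConvexCone.mem_hull_of_convex hconv).1 (hle hw)
  exact ⟨c, hc.le, z, hz, rfl⟩

lemma feasibleCone_convexHull (s : Set E) (x : E) :
    feasibleCone (convexHull ℝ s) x = PointedCone.hull ℝ ((· - x) '' s) := by
  set C := PointedCone.hull ℝ ((· - x) '' s)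
  refine le_antisymm (Submodule.span_le.2 ?_)
    (Submodule.span_mono (image_mono (subset_convexHull ℝ s)))
  rintro _ ⟨z, hz, rfl⟩
  have hconv : Convex ℝ ((· - x) ⁻¹' (C : Set E)) := by
    simpa only [neg_add_eq_sub] using C.convex.translate_preimage_right (-x)
  refine convexHull_min (fun z hz => mem_preimage.2 ?_) hconv hz
  exact PointedCone.subset_hull (mem_image_of_mem _ hz)

end FeasibleCone

lemma hasFDerivWithinAt_of_hasFDerivAt_interior {E F : Type*} [NormedAddCommGroup E]
    [NormedSpace ℝ E] [NormedAddCommGroup F] [NormedSpace ℝ F] {M O : Set E} {f : E → F}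
    {f' : E → E →L[ℝ] F} (hMc : Convex ℝ M) (hMcl : IsClosed M) (hMi : (interior M).Nonempty)
    (hO : IsOpen O) (hf : ContinuousOn f (M ∩ O)) (hf' : ContinuousOn f' (M ∩ O))
    (hderiv : ∀ y ∈ interior (M ∩ O), HasFDerivAt f (f' y) y) {x : E} (hx : x ∈ M ∩ O) :
    HasFDerivWithinAt f (f' x) (M ∩ O) x := by
  -- `s` is convex and open, its closure stays inside `M ∩ O`, and it is dense in `M` near `x`.
  obtain ⟨r, hr, hrO⟩ := Metric.nhds_basis_closedBall.mem_iff.1 (hO.mem_nhds hx.2)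
  set s := Metric.ball x r ∩ interior M
  have hsU : s ⊆ interior (M ∩ O) := by
    rw [interior_inter, hO.interior_eq, inter_comm]
    exact inter_subset_inter_left _ (Metric.ball_subset_closedBall.trans hrO)
  have hcl : closure s ⊆ M ∩ O := fun y hy => by
    obtain ⟨hyB, hyM⟩ := closure_inter_subset_inter_closure _ _ hy
    exact ⟨closure_minimal interior_subset hMcl hyM,
      hrO (Metric.closure_ball_subset_closedBall hyB)⟩
  have hMs : M ∩ Metric.ball x r ⊆ closure s := fun y hy => Metric.isOpen_ball.inter_closure
    ⟨hy.2, hMc.closure_interior_eq_closure_of_nonempty_interior hMi ▸ subset_closure hy.1⟩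
  have hext : HasFDerivWithinAt f (f' x) (closure s) x := by
    refine hasFDerivWithinAt_closure_of_tendsto_fderiv
      (fun y hy => (hderiv y (hsU hy)).differentiableAt.differentiableWithinAt)
      ((convex_ball x r).inter hMc.interior) (Metric.isOpen_ball.inter isOpen_interior)
      (fun y hy => (hf y (hcl hy)).mono (hsU.trans interior_subset)) ?_
    refine ((hf' x hx).tendsto.mono_left (nhdsWithin_mono _ (hsU.trans interior_subset))).congr' ?_
    exact eventually_nhdsWithin_of_forall fun y hy => (hderiv y (hsU hy)).fderiv.symm
  rw [← hasFDerivWithinAt_inter (Metric.ball_mem_nhds x hr)]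
  exact hext.mono ((inter_subset_inter_left _ inter_subset_left).trans hMs)

section Derivative

variable {E F : Type*} [NormedAddCommGroup E] [NormedSpace ℝ E] [NormedAddCommGroup F]
  [NormedSpace ℝ F] {f : E → F} {f' : E →L[ℝ] F}

lemma HasFDerivWithinAt.mem_closure_feasibleCone {s : Set E} {t : Set F} {x : E}
    (hf : HasFDerivWithinAt f f' s x) (hst : MapsTo f s t) {u : E}
    (hu : ∀ᶠ τ in 𝓝[>] (0 : ℝ), x + τ • u ∈ s) :
    f' u ∈ closure (feasibleCone t (f x) : Set F) := by
  have hd : Tendsto (fun τ : ℝ => τ • u) (𝓝[>] 0) (𝓝 0) := by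
    simpa using (tendsto_id.smul_const u).mono_left (nhdsWithin_le_nhds (a := (0 : ℝ)))
  have hcd : Tendsto (fun τ : ℝ => τ⁻¹ • τ • u) (𝓝[>] 0) (𝓝 u) :=
    tendsto_const_nhds.congr' (eventually_nhdsWithin_of_forall fun τ (hτ : 0 < τ) => by
      dsimp only; rw [smul_smul, inv_mul_cancel₀ hτ.ne', one_smul])
  refine mem_closure_of_tendsto (hf.lim hd hu hcd) ?_
  filter_upwards [hu, self_mem_nhdsWithin] with τ hτ (hτ0 : 0 < τ)
  exact PointedCone.smul_mem _ (inv_nonneg.2 hτ0.le)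
    (PointedCone.subset_hull ⟨_, hst hτ, rfl⟩)

lemma HasFDerivWithinAt.feasibleCone_le_comap {M O : Set E} {N : Set F} {x : E}
    (hM : Convex ℝ M) (hO : IsOpen O) (hx : x ∈ M ∩ O) (hf : HasFDerivWithinAt f f' (M ∩ O) x)
    (hmaps : MapsTo f (M ∩ O) N) (hN : IsClosed (feasibleCone N (f x) : Set F)) :
    feasibleCone M x ≤ (feasibleCone N (f x)).comap (f' : E →ₗ[ℝ] F) := by
  refine Submodule.span_le.2 ?_
  rintro _ ⟨z, hz, rfl⟩
  rw [SetLike.mem_coe, PointedCone.mem_comap, ← SetLike.mem_coe, ← hN.closure_eq]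
  refine hf.mem_closure_feasibleCone hmaps ?_
  have hO' : ∀ᶠ τ in 𝓝 (0 : ℝ), x + τ • (z - x) ∈ O :=
    (Continuous.tendsto (by fun_prop) 0).eventually (by simpa using hO.mem_nhds hx.2)
  filter_upwards [Ioc_mem_nhdsGT one_pos, nhdsWithin_le_nhds hO'] with τ hτ hτO
  exact ⟨hM.add_smul_sub_mem hx.1 hz (Ioc_subset_Icc_self hτ), hτO⟩

end Derivative

section Faces

variable {n : ℕ} {M : Set (Fin n → ℝ)} {x : Fin n → ℝ}

lemma mem_smallestFace_self : x ∈ smallestFace n M x := fun _ hF => hF.2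

lemma smallestFace_subset {F : Set (Fin n → ℝ)} (hF : IsFaceOf n M F) (hx : x ∈ F) :
    smallestFace n M x ⊆ F :=
  sInter_subset_of_mem ⟨hF, hx⟩

lemma smallestFace_isExtreme (hM : Convex ℝ M) (hx : x ∈ M) :
    IsExtreme ℝ M (smallestFace n M x) :=
  ⟨fun _ hz => hz M ⟨⟨hM, IsExtreme.rfl⟩, hx⟩,
    fun _ h₁ _ h₂ _ hz hseg F hF => hF.1.2.2 h₁ h₂ (hz F hF) hseg⟩

lemma isFaceOf_setOf_sub_mem_feasibleCone (hM : Convex ℝ M) :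
    IsFaceOf n M {z ∈ M | x - z ∈ feasibleCone M x} := by
  set C := feasibleCone M x
  refine ⟨fun z₁ hz₁ z₂ hz₂ a b ha hb hab => ⟨hM hz₁.1 hz₂.1 ha hb hab, ?_⟩,
    fun z hz => hz.1, fun p hp q hq z hz hseg => ⟨hp, ?_⟩⟩
  · have : x - (a • z₁ + b • z₂) = a • (x - z₁) + b • (x - z₂) := by
      linear_combination (norm := module) -(hab • x)
    rw [this]
    exact C.add_mem (C.smul_mem ha hz₁.2) (C.smul_mem hb hz₂.2)
  · obtain ⟨a, b, ha, hb, hab, rfl⟩ := hseg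
    have : x - p = a⁻¹ • ((x - (a • p + b • q)) + b • (q - x)) := by
      obtain rfl : b = 1 - a := by linarith
      match_scalars <;> field_simp <;> ring
    rw [this]
    exact C.smul_mem (inv_nonneg.2 ha.le)
      (C.add_mem hz.2 (C.smul_mem hb.le (PointedCone.subset_hull ⟨q, hq, rfl⟩)))

lemma spanAt_le_lineal_feasibleCone (hM : Convex ℝ M) (hx : x ∈ M) :
    spanAt n M x ≤ (feasibleCone M x).lineal := by
  refine Submodule.span_le.2 ?_
  rintro _ ⟨y, hy, rfl⟩
  obtain ⟨hyM, hxy⟩ := smallestFace_subset (isFaceOf_setOf_sub_mem_feasibleCone (x := x) hM)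
    ⟨hx, by simp⟩ hy
  rw [SetLike.mem_coe, PointedCone.mem_lineal, neg_sub]
  exact ⟨PointedCone.subset_hull ⟨y, hyM, rfl⟩, hxy⟩

lemma lineal_feasibleCone_le_spanAt (hM : Convex ℝ M) (hx : x ∈ M) :
    (feasibleCone M x).lineal ≤ spanAt n M x := by
  rintro w ⟨hw, hw'⟩
  by_cases hw0 : w = 0
  · rw [hw0]; exact Submodule.zero_mem _
  obtain ⟨c, hc, z, hz, rfl⟩ := exists_eq_smul_sub_of_mem_feasibleCone hM hx hw
  obtain ⟨c', hc', z', hz', hwz'⟩ := exists_eq_smul_sub_of_mem_feasibleCone hM hx hw'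
  have hc0 : 0 < c := hc.lt_of_ne (by rintro rfl; simp at hw0)
  have hc'0 : 0 < c' := hc'.lt_of_ne (by rintro rfl; exact hw0 (by simpa using hwz'))
  have hseg : x ∈ openSegment ℝ z z' := by
    have h : c • z + c' • z' = (c + c') • x := by linear_combination (norm := module) -hwz'
    refine ⟨c / (c + c'), c' / (c + c'), by positivity, by positivity, by field_simp, ?_⟩
    rw [div_eq_inv_mul, div_eq_inv_mul, mul_smul, mul_smul, ← smul_add, h, smul_smul,
      inv_mul_cancel₀ (by positivity), one_smul]
  have hzF := (smallestFace_isExtreme hM hx).2 hz hz' mem_smallestFace_self hseg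
  exact Submodule.smul_mem _ c (Submodule.subset_span ⟨z, hzF, rfl⟩)

end Faces

lemma IsPolytope.convex {n : ℕ} {M : Set (Fin n → ℝ)} (hM : IsPolytope n M) : Convex ℝ M := by
  obtain ⟨S, rfl⟩ := hM
  exact convex_convexHull ℝ _

lemma IsPolytope.isClosed {n : ℕ} {M : Set (Fin n → ℝ)} (hM : IsPolytope n M) : IsClosed M := by
  obtain ⟨S, rfl⟩ := hM
  exact S.finite_toSet.isClosed_convexHull ℝ

lemma IsPolytope.isClosed_feasibleCone {n : ℕ} {M : Set (Fin n → ℝ)} (hM : IsPolytope n M)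
    (x : Fin n → ℝ) : IsClosed (feasibleCone M x : Set (Fin n → ℝ)) := by
  classical
  obtain ⟨S, rfl⟩ := hM
  rw [feasibleCone_convexHull, ← Finset.coe_image]
  exact PointedCone.isClosed_hull_finset _

theorem derivative_maps_face_span_into_face_span_general {n : ℕ}
    (M N U V : Set (Fin n → ℝ))
    (hM : IsPolytope n M) (hMi : (interior M).Nonempty)
    (hN : IsPolytope n N)
    (hU : ∃ O : Set (Fin n → ℝ), IsOpen O ∧ U = M ∩ O)
    (hV : ∃ O : Set (Fin n → ℝ), IsOpen O ∧ V = N ∩ O)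
    (φ : (Fin n → ℝ) → (Fin n → ℝ)) (φ' : (Fin n → ℝ) → ((Fin n → ℝ) →L[ℝ] (Fin n → ℝ)))
    (hmaps : Set.MapsTo φ U V) (hcont : ContinuousOn φ U)
    (hcont' : ContinuousOn φ' U)
    (hderiv : ∀ x ∈ interior U, HasFDerivAt φ (φ' x) x) :
    ∀ x ∈ U, ∀ v ∈ spanAt n M x, φ' x v ∈ spanAt n N (φ x) := by
  obtain ⟨O, hO, rfl⟩ := hU
  obtain ⟨O', -, rfl⟩ := hV
  intro x hx v hv
  have hφ := hasFDerivWithinAt_of_hasFDerivAt_interior hM.convex hM.isClosed hMi hO hcont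
    hcont' hderiv hx
  have hcone := hφ.feasibleCone_le_comap hM.convex hO hx (fun y hy => (hmaps hy).1)
    (hN.isClosed_feasibleCone (φ x))
  obtain ⟨hv₁, hv₂⟩ := spanAt_le_lineal_feasibleCone hM.convex hx.1 hv
  refine lineal_feasibleCone_le_spanAt hN.convex (hmaps hx).1 ⟨hcone hv₁, ?_⟩
  simpa using hcone hv₂

/-- Let `M, N ⊆ ℝⁿ` be convex polytopes with nonempty interior,
`U ⊆ M`, `V ⊆ N` relatively open, and `φ : U → V` a `C¹`-map (continuous, with a
derivative on the interior extending continuously to `U`).  Then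
`φ'(x)(E(x)) ⊆ F(φ(x))` for all `x ∈ U`. -/
theorem derivative_maps_face_span_into_face_span {n : ℕ}
    (M N U V : Set (Fin n → ℝ))
    (hM : IsPolytope n M) (hMi : (interior M).Nonempty)
    (hN : IsPolytope n N) (hNi : (interior N).Nonempty)
    (hU : ∃ O : Set (Fin n → ℝ), IsOpen O ∧ U = M ∩ O)
    (hV : ∃ O : Set (Fin n → ℝ), IsOpen O ∧ V = N ∩ O)
    (φ : (Fin n → ℝ) → (Fin n → ℝ)) (φ' : (Fin n → ℝ) → ((Fin n → ℝ) →L[ℝ] (Fin n → ℝ)))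
    (hmaps : Set.MapsTo φ U V) (hcont : ContinuousOn φ U)
    (hcont' : ContinuousOn φ' U)
    (hderiv : ∀ x ∈ interior U, HasFDerivAt φ (φ' x) x) :
    ∀ x ∈ U, ∀ v ∈ spanAt n M x, φ' x v ∈ spanAt n N (φ x) :=
  derivative_maps_face_span_into_face_span_general M N U V hM hMi hN hU hV φ φ' hmaps hcont hcont'
    hderiv
end

section
/- Let M ⊆ ℝⁿ be a convex polytope with nonempty interior and f : M → ℝⁿ Lipschitz with Lip(f) < 1 such that φ := id + f satisfies φ(∂M) = ∂M and φ(M) ⊆ M. Then φ(M) = M and φ(M⁰) = M⁰, where M⁰ is the interior of M. -/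
open Set

/-!
`φ = id + f` is a Lipschitz perturbation of the identity of constant `< 1`, so it is injective
and, by the Lipschitz inverse function theorem, maps the interior of `M` onto an open set.
Since `φ` permutes `∂M`, injectivity forces `φ(M⁰) = φ(M) \ ∂M = φ(M) ∩ M⁰`, which is
relatively closed in `M⁰` because `φ(M)` is compact. The interior of a convex set is connected,
so the nonempty clopen subset `φ(M⁰)` of `M⁰` is all of `M⁰`.
-/

theorem IsPreconnected.subset_of_isOpen_of_isClosed {X : Type*} [TopologicalSpace X]
    {s u C : Set X} (hs : IsPreconnected s) (hu : IsOpen u) (hC : IsClosed C) (huC : u ⊆ C)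
    (hsC : s ∩ C ⊆ u) (hsu : (s ∩ u).Nonempty) : s ⊆ u :=
  hs.subset_left_of_subset_union hu hC.isOpen_compl
    (disjoint_compl_right.mono_left huC)
    (fun x hx => (em (x ∈ C)).imp (fun hxC => hsC ⟨hx, hxC⟩) id) hsu

section PermutesFrontier

variable {X : Type*} [TopologicalSpace X] {M : Set X} {φ : X → X}

theorem Set.InjOn.image_interior_eq_image_diff_frontier (hM : IsClosed M) (hinj : InjOn φ M)
    (hbd : φ '' frontier M = frontier M) : φ '' interior M = φ '' M \ frontier M := by
  rw [← self_sdiff_frontier, hinj.image_sdiff_subset hM.frontier_subset, hbd]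

theorem image_interior_subset_interior_of_image_frontier_eq (hM : IsClosed M)
    (hinj : InjOn φ M) (hbd : φ '' frontier M = frontier M) (hsub : φ '' M ⊆ M) :
    φ '' interior M ⊆ interior M := by
  rw [hinj.image_interior_eq_image_diff_frontier hM hbd, ← self_sdiff_frontier]
  exact sdiff_subset_sdiff_left hsub

theorem image_interior_eq_of_image_frontier_eq [T2Space X] (hM : IsCompact M)
    (hMi : IsPreconnected (interior M)) (hne : (interior M).Nonempty) (hcont : ContinuousOn φ M)
    (hinj : InjOn φ M) (hopen : IsOpen (φ '' interior M)) (hbd : φ '' frontier M = frontier M)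
    (hsub : φ '' M ⊆ M) : φ '' interior M = interior M := by
  have hφint := image_interior_subset_interior_of_image_frontier_eq hM.isClosed hinj hbd hsub
  refine hφint.antisymm (hMi.subset_of_isOpen_of_isClosed hopen
    (hM.image_of_continuousOn hcont).isClosed (image_mono interior_subset) ?_ ?_)
  · rintro x ⟨hx, hxφ⟩
    rw [hinj.image_interior_eq_image_diff_frontier hM.isClosed hbd]
    exact ⟨hxφ, disjoint_interior_frontier.notMem_of_mem_left hx⟩
  · obtain ⟨x, hx⟩ := hne
    exact ⟨φ x, hφint ⟨x, hx, rfl⟩, x, hx, rfl⟩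

theorem image_eq_of_image_interior_eq (hM : IsClosed M) (hbd : φ '' frontier M = frontier M)
    (hint : φ '' interior M = interior M) : φ '' M = M := by
  rw [← hM.closure_eq, closure_eq_interior_union_frontier, image_union, hint, hbd]

end PermutesFrontier

section LipschitzPerturbation

variable {𝕜 : Type*} [NontriviallyNormedField 𝕜] {E : Type*} [NormedAddCommGroup E]
  [NormedSpace 𝕜 E] {f : E → E} {K : NNReal} {s : Set E}

theorem LipschitzOnWith.approximatesLinearOn_id_add (hf : LipschitzOnWith K f s) :
    ApproximatesLinearOn (fun x => x + f x) ((ContinuousLinearEquiv.refl 𝕜 E : E →L[𝕜] E)) s K :=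
  LipschitzOnWith.approximatesLinearOn (by convert hf using 1; ext; simp)

theorem subsingleton_or_lt_inv_nnnorm_refl (hK : K < 1) :
    Subsingleton E ∨ K < ‖((ContinuousLinearEquiv.refl 𝕜 E).symm : E →L[𝕜] E)‖₊⁻¹ := by
  rcases subsingleton_or_nontrivial E with hE | _
  · exact Or.inl hE
  · right
    simpa using hK

end LipschitzPerturbation

/-- Let `M ⊆ ℝⁿ` be a convex polytope with nonempty interior and
`f : M → ℝⁿ` Lipschitz with `Lip(f) < 1` such that `φ := id + f` satisfies
`φ(∂M) = ∂M` and `φ(M) ⊆ M`.  Then `φ(M) = M` and `φ(M⁰) = M⁰`. -/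
theorem perturbation_preserving_boundary_is_surjective {n : ℕ} (M : Set (Fin n → ℝ))
    (hM : IsPolytope n M) (hMi : (interior M).Nonempty)
    (f : (Fin n → ℝ) → (Fin n → ℝ)) (K : NNReal) (hK : K < 1)
    (hf : LipschitzOnWith K f M)
    (hbd : (fun x => x + f x) '' frontier M = frontier M)
    (hsub : (fun x => x + f x) '' M ⊆ M) :
    (fun x => x + f x) '' M = M ∧
      (fun x => x + f x) '' interior M = interior M := by
  obtain ⟨S, rfl⟩ := hM
  have hcompact := S.finite_toSet.isCompact_convexHull ℝ
  have happrox := hf.approximatesLinearOn_id_add (𝕜 := ℝ)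
  have hc := subsingleton_or_lt_inv_nnnorm_refl (𝕜 := ℝ) (E := Fin n → ℝ) hK
  have hint := image_interior_eq_of_image_frontier_eq hcompact
    (convex_convexHull ℝ _).interior.isPreconnected hMi happrox.continuousOn (happrox.injOn hc)
    ((happrox.mono_set interior_subset).open_image
      (ContinuousLinearEquiv.refl ℝ _).toNonlinearRightInverse isOpen_interior hc)
    hbd hsub
  exact ⟨image_eq_of_image_interior_eq hcompact.isClosed hbd hint, hint⟩
end

section
/- There is no smooth local addition on M = [0,∞) in Michor's sense: there exists no smooth map τ : ⁱTM → M such that (τ, π) : ⁱTM → M × M is a diffeomorphism onto an open neighbourhood of the diagonal and τ(x, 0) = x for all x ∈ M, where ⁱTM = ({0} × [0,∞)) ∪ ((0,∞) × ℝ) ⊆ [0,∞) × ℝ is the set of inner tangent vectors. -/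
open Set

/-- The set `ⁱTM = ({0} × [0,∞)) ∪ ((0,∞) × ℝ)` of inner tangent vectors of
`M = [0,∞)`. -/
def innerTangent : Set (ℝ × ℝ) :=
  ({0} ×ˢ Ici (0 : ℝ)) ∪ (Ioi (0 : ℝ) ×ˢ (univ : Set ℝ))

/-- Smoothness of a map on a subset `S` (with dense interior) in the sense used for
manifolds with rough boundary: `f` is continuous on `S`, smooth on the interior of
`S`, and all its iterated derivatives extend continuously to `S`. -/
def MSmoothOn {E F : Type} [NormedAddCommGroup E] [NormedSpace ℝ E]
    [NormedAddCommGroup F] [NormedSpace ℝ F] (f : E → F) (S : Set E) : Prop :=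
  ContinuousOn f S ∧ ContDiffOn ℝ (⊤ : ℕ∞) f (interior S) ∧
    ∀ k : ℕ, ∃ g : E → ContinuousMultilinearMap ℝ (fun _ : Fin k => E) F,
      ContinuousOn g S ∧
        ∀ x ∈ interior S, g x = iteratedFDerivWithin ℝ k f (interior S) x

open Filter Topology

lemma mem_innerTangent_of_pos {p : ℝ × ℝ} (h : 0 < p.1) : p ∈ innerTangent :=
  Or.inr ⟨h, trivial⟩

lemma origin_mem_innerTangent : ((0 : ℝ), (0 : ℝ)) ∈ innerTangent :=
  Or.inl ⟨rfl, by simp⟩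

lemma interior_innerTangent : interior innerTangent = Ioi (0 : ℝ) ×ˢ (univ : Set ℝ) := by
  apply subset_antisymm
  · have h1 : innerTangent ⊆ Ici (0 : ℝ) ×ˢ (univ : Set ℝ) := by
      rintro ⟨x, y⟩ (⟨hx, hy⟩ | ⟨hx, hy⟩)
      · exact ⟨le_of_eq (by simpa using hx.symm), trivial⟩
      · exact ⟨show (0:ℝ) ≤ x from le_of_lt hx, trivial⟩
    calc interior innerTangent ⊆ interior (Ici (0 : ℝ) ×ˢ (univ : Set ℝ)) :=
          interior_mono h1
      _ = Ioi (0 : ℝ) ×ˢ (univ : Set ℝ) := by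
          rw [interior_prod_eq, interior_Ici, interior_univ]
  · exact interior_maximal (fun p hp => Or.inr hp) (isOpen_Ioi.prod isOpen_univ)

lemma fin1_const {α : Type*} [Zero α] (v : α) :
    (Fin.snoc 0 v : Fin 1 → α) = fun _ => v := by
  funext i
  fin_cases i
  simp [Fin.snoc]

lemma eval1_linear {F : Type*} [NormedAddCommGroup F] [NormedSpace ℝ F]
    (f : ContinuousMultilinearMap ℝ (fun _ : Fin 1 => ℝ × ℝ) F) (c : ℝ) (u w : ℝ × ℝ) :
    f (fun _ => c • u + w) = c • f (fun _ => u) + f (fun _ => w) := by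
  have h : ∀ z : ℝ × ℝ, (fun _ : Fin 1 => z) = Function.update (fun _ : Fin 1 => u) 0 z := by
    intro z
    funext i
    fin_cases i
    simp
  calc f (fun _ => c • u + w)
      = f (Function.update (fun _ : Fin 1 => u) 0 (c • u + w)) := by rw [← h]
    _ = f (Function.update (fun _ : Fin 1 => u) 0 (c • u))
        + f (Function.update (fun _ : Fin 1 => u) 0 w) := f.map_update_add _ 0 _ _
    _ = c • f (Function.update (fun _ : Fin 1 => u) 0 u) + f (fun _ => w) := by
        rw [f.map_update_smul, ← h w]
    _ = c • f (fun _ => u) + f (fun _ => w) := by rw [← h u]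

/-- The key boundary-ray argument: if `τ` is nonnegative on `innerTangent`, vanishes at
the origin, and its (continuously extended) derivative at the origin is negative in an
inward direction `v`, we get a contradiction via the mean value theorem. -/
lemma ray_lemma (τ : ℝ × ℝ → ℝ) (hτc : ContinuousOn τ innerTangent)
    (hτdiff : DifferentiableOn ℝ τ (interior innerTangent))
    (g : ℝ × ℝ → ContinuousMultilinearMap ℝ (fun _ : Fin 1 => ℝ × ℝ) ℝ)
    (hgc : ContinuousOn g innerTangent)
    (hg : ∀ p : ℝ × ℝ, 0 < p.1 → g p = iteratedFDeriv ℝ 1 τ p)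
    (hpos : ∀ p ∈ innerTangent, 0 ≤ τ p) (h0 : τ ((0 : ℝ), (0 : ℝ)) = 0)
    (v : ℝ × ℝ) (hv : 0 < v.1)
    (hneg : g ((0 : ℝ), (0 : ℝ)) (fun _ => v) < 0) : False := by
  set ψ : ℝ → ℝ := fun t => g (t • v) (fun _ => v) with hψ
  have hraymem : ∀ t : ℝ, 0 ≤ t → t • v ∈ innerTangent := by
    intro t ht
    rcases eq_or_lt_of_le ht with h | h
    · rw [← h, zero_smul]
      exact origin_mem_innerTangent
    · exact mem_innerTangent_of_pos (by simpa [Prod.smul_fst] using mul_pos h hv)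
  have hψcont : Tendsto ψ (𝓝[Ici (0:ℝ)] 0) (𝓝 (ψ 0)) := by
    have hray : Tendsto (fun t : ℝ => t • v) (𝓝[Ici (0:ℝ)] 0)
        (𝓝[innerTangent] ((0 : ℝ), (0 : ℝ))) := by
      apply tendsto_nhdsWithin_of_tendsto_nhds_of_eventually_within
      · have : Tendsto (fun t : ℝ => t • v) (𝓝 0) (𝓝 ((0:ℝ) • v)) :=
          (continuous_id.smul continuous_const).tendsto 0
        rw [zero_smul] at this
        exact this.mono_left nhdsWithin_le_nhds
      · filter_upwards [self_mem_nhdsWithin] with t ht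
        exact hraymem t ht
    have hcw : Tendsto g (𝓝[innerTangent] ((0 : ℝ), (0 : ℝ))) (𝓝 (g ((0 : ℝ), (0 : ℝ)))) :=
      hgc _ origin_mem_innerTangent
    have hg0 : Tendsto (fun t : ℝ => g (t • v)) (𝓝[Ici (0:ℝ)] 0)
        (𝓝 (g ((0 : ℝ), (0 : ℝ)))) :=
      hcw.comp hray
    have := ((ContinuousMultilinearMap.apply ℝ (fun _ : Fin 1 => ℝ × ℝ) ℝ
        (fun _ => v)).continuous.tendsto _).comp hg0
    have h0' : ((0:ℝ) • v) = ((0:ℝ), (0:ℝ)) := by rw [zero_smul]; rfl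
    show Tendsto (fun t : ℝ => g (t • v) (fun _ => v)) _ (𝓝 (g ((0:ℝ) • v) (fun _ => v)))
    rw [h0']
    exact this
  have hψ0 : ψ 0 < 0 := by
    have h0' : ((0:ℝ) • v) = ((0:ℝ), (0:ℝ)) := by rw [zero_smul]; rfl
    show g ((0:ℝ) • v) (fun _ => v) < 0
    rw [h0']
    exact hneg
  have hev : ∀ᶠ t in 𝓝[Ici (0:ℝ)] 0, ψ t < 0 := hψcont (Iio_mem_nhds hψ0)
  rw [eventually_nhdsWithin_iff] at hev
  obtain ⟨ε, hε, hball⟩ := Metric.eventually_nhds_iff.1 hev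
  set b : ℝ := ε / 2 with hbdef
  have hb : 0 < b := by positivity
  have hcont : ContinuousOn (fun t : ℝ => τ (t • v)) (Icc 0 b) := by
    apply hτc.comp ((continuous_id.smul continuous_const).continuousOn)
    intro t ht
    exact hraymem t ht.1
  have hderiv : ∀ t ∈ Ioo (0:ℝ) b, HasDerivAt (fun t : ℝ => τ (t • v)) (ψ t) t := by
    intro t ht
    have htpos : 0 < (t • v).1 := by
      simpa [Prod.smul_fst] using mul_pos ht.1 hv
    have hmem : t • v ∈ interior innerTangent := by
      rw [interior_innerTangent]; exact ⟨htpos, trivial⟩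
    have hda : DifferentiableAt ℝ τ (t • v) :=
      (hτdiff _ hmem).differentiableAt (isOpen_interior.mem_nhds hmem)
    have h2 : HasDerivAt (fun s : ℝ => s • v) v t := by
      simpa using (hasDerivAt_id t).smul_const v
    have h3 := hda.hasFDerivAt.comp_hasDerivAt t h2
    have h4 : ψ t = fderiv ℝ τ (t • v) v := by
      show (g (t • v)) (fun _ => v) = _
      rw [hg _ htpos, iteratedFDeriv_one_apply]
    rw [h4]
    exact h3
  obtain ⟨c, hc, hceq⟩ := exists_hasDerivAt_eq_slope (fun t : ℝ => τ (t • v)) ψ hb hcont hderiv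
  have hcneg : ψ c < 0 := by
    apply hball
    · rw [Real.dist_eq, sub_zero, abs_of_pos hc.1]
      calc c < b := hc.2
        _ < ε := by rw [hbdef]; linarith
    · exact le_of_lt hc.1
  have h00 : τ ((0:ℝ) • v) = 0 := by rw [zero_smul]; exact h0
  have hbv : 0 ≤ τ (b • v) := hpos _ (hraymem b hb.le)
  rw [hceq, h00] at hcneg
  simp only [sub_zero] at hcneg
  have : 0 ≤ τ (b • v) / b := div_nonneg hbv hb.le
  linarith

/-- There is no smooth local addition on `M = [0,∞)` in Michor's
sense: no smooth `τ : ⁱTM → M` with `τ(x,0) = x` such that `(τ, π) : ⁱTM → M × M`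
is a diffeomorphism onto an open neighbourhood of the diagonal in `M × M`. -/
theorem no_local_addition_on_halfline :
    ¬ ∃ (τ : ℝ × ℝ → ℝ) (W : Set (ℝ × ℝ)),
      MSmoothOn τ innerTangent ∧
      (∀ p ∈ innerTangent, 0 ≤ τ p) ∧
      (∀ x : ℝ, 0 ≤ x → τ (x, 0) = x) ∧
      (∃ O : Set (ℝ × ℝ), IsOpen O ∧ W = (Ici (0:ℝ) ×ˢ Ici (0:ℝ)) ∩ O) ∧
      (∀ x : ℝ, 0 ≤ x → (x, x) ∈ W) ∧
      Set.BijOn (fun p => (τ p, p.1)) innerTangent W ∧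
      (∃ σ : ℝ × ℝ → ℝ × ℝ, MSmoothOn σ W ∧
        Set.InvOn σ (fun p => (τ p, p.1)) innerTangent W) := by
  rintro ⟨τ, W, ⟨hτc, hτd, hτk⟩, hpos, hτ0, ⟨O, hO, hWeq⟩, hdiag, hbij, σ, ⟨hσc, hσd, hσk⟩, hinv⟩
  obtain ⟨g, hgc, hgeq⟩ := hτk 1
  have hgeq' : ∀ p : ℝ × ℝ, 0 < p.1 → g p = iteratedFDeriv ℝ 1 τ p := by
    intro p hp
    have hpint : p ∈ interior innerTangent := by
      rw [interior_innerTangent]; exact ⟨hp, trivial⟩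
    rw [hgeq p hpint, iteratedFDerivWithin_of_isOpen 1 isOpen_interior hpint]
  have hτdiff : DifferentiableOn ℝ τ (interior innerTangent) := hτd.differentiableOn (by simp)
  have hzero : τ ((0:ℝ), (0:ℝ)) = 0 := hτ0 0 le_rfl
  have hray := ray_lemma τ hτc hτdiff g hgc hgeq' hpos hzero
  set a : ℝ := g ((0:ℝ), (0:ℝ)) (fun _ => ((0:ℝ), (1:ℝ))) with hadef
  set bb : ℝ := g ((0:ℝ), (0:ℝ)) (fun _ => ((1:ℝ), (0:ℝ))) with hbbdef
  rcases lt_trichotomy a 0 with ha | ha | ha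
  · -- a < 0 : go inward along v = (ε, 1) with ε small
    set B : ℝ := |bb| + 1 with hBdef
    have hB : 0 < B := by positivity
    set ε : ℝ := (-a) / (2 * B) with hεdef
    have hε : 0 < ε := by
      apply div_pos (by linarith) (by linarith)
    have hvec : ((ε, 1) : ℝ × ℝ) = ε • ((1:ℝ), (0:ℝ)) + ((0:ℝ), (1:ℝ)) := by
      simp [Prod.ext_iff]
    have hval : g ((0:ℝ), (0:ℝ)) (fun _ => ((ε, 1) : ℝ × ℝ)) = ε * bb + a := by
      rw [hvec, eval1_linear, smul_eq_mul, ← hadef, ← hbbdef]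
    have hneg : g ((0:ℝ), (0:ℝ)) (fun _ => ((ε, 1) : ℝ × ℝ)) < 0 := by
      rw [hval]
      have h1 : bb ≤ |bb| := le_abs_self bb
      have h2 : ε * bb ≤ ε * B := by nlinarith
      have h3 : ε * B = -a / 2 := by
        rw [hεdef]; field_simp
      nlinarith
    exact hray ((ε, 1) : ℝ × ℝ) hε hneg
  · -- a = 0 : contradiction with the smooth inverse σ
    obtain ⟨G, hGc, hGeq⟩ := hσk 1
    have hWint : interior W = (Ioi (0:ℝ) ×ˢ Ioi (0:ℝ)) ∩ O := by
      rw [hWeq, interior_inter, hO.interior_eq, interior_prod_eq, interior_Ici]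
    have hdiagint : ∀ x : ℝ, 0 < x → ((x, x) : ℝ × ℝ) ∈ interior W := by
      intro x hx
      have hW := hdiag x hx.le
      rw [hWint]
      refine ⟨⟨hx, hx⟩, ?_⟩
      rw [hWeq] at hW
      exact hW.2
    have hσdiff : DifferentiableOn ℝ σ (interior W) := hσd.differentiableOn (by simp)
    have key : ∀ x : ℝ, 0 < x →
        G (x, x) (fun _ => ((g (x, 0) (fun _ => ((0:ℝ), (1:ℝ))), 0) : ℝ × ℝ))
          = ((0:ℝ), (1:ℝ)) := by
      intro x hx
      have hx0 : ((x, 0) : ℝ × ℝ) ∈ interior innerTangent := by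
        rw [interior_innerTangent]; exact ⟨hx, trivial⟩
      have hxx : ((x, x) : ℝ × ℝ) ∈ interior W := hdiagint x hx
      have hτa : DifferentiableAt ℝ τ (x, 0) :=
        (hτdiff _ hx0).differentiableAt (isOpen_interior.mem_nhds hx0)
      have hσa : DifferentiableAt ℝ σ (x, x) :=
        (hσdiff _ hxx).differentiableAt (isOpen_interior.mem_nhds hxx)
      have hF : HasFDerivAt (fun p : ℝ × ℝ => (τ p, p.1))
          ((fderiv ℝ τ (x, 0)).prod (ContinuousLinearMap.fst ℝ ℝ ℝ)) (x, 0) :=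
        hτa.hasFDerivAt.prodMk hasFDerivAt_fst
      have hFx : ((fun p : ℝ × ℝ => (τ p, p.1)) (x, 0)) = ((x, x) : ℝ × ℝ) := by
        simp [hτ0 x hx.le]
      have hσ' : HasFDerivAt σ (fderiv ℝ σ (x, x)) ((fun p : ℝ × ℝ => (τ p, p.1)) (x, 0)) := by
        rw [hFx]; exact hσa.hasFDerivAt
      have hcomp := hσ'.comp (x, 0) hF
      have hnb : innerTangent ∈ 𝓝 ((x, 0) : ℝ × ℝ) := mem_interior_iff_mem_nhds.1 hx0
      have hee : (fun p : ℝ × ℝ => p)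
          =ᶠ[𝓝 ((x, 0) : ℝ × ℝ)] (σ ∘ fun p : ℝ × ℝ => (τ p, p.1)) := by
        filter_upwards [hnb] with p hp
        exact (hinv.1 hp).symm
      have hid : HasFDerivAt (fun p : ℝ × ℝ => p)
          ((fderiv ℝ σ (x, x)).comp
            ((fderiv ℝ τ (x, 0)).prod (ContinuousLinearMap.fst ℝ ℝ ℝ))) (x, 0) :=
        hcomp.congr_of_eventuallyEq hee
      have huniq : (fderiv ℝ σ (x, x)).comp
            ((fderiv ℝ τ (x, 0)).prod (ContinuousLinearMap.fst ℝ ℝ ℝ))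
          = ContinuousLinearMap.id ℝ (ℝ × ℝ) :=
        hid.unique (hasFDerivAt_id _)
      have happ := congrArg (fun L : ℝ × ℝ →L[ℝ] ℝ × ℝ => L ((0:ℝ), (1:ℝ))) huniq
      simp only [ContinuousLinearMap.comp_apply, ContinuousLinearMap.prod_apply,
        ContinuousLinearMap.coe_fst', ContinuousLinearMap.id_apply] at happ
      -- happ : fderiv σ (x,x) (fderiv τ (x,0) (0,1), 0) = (0,1)
      have hgτ : g ((x : ℝ), (0 : ℝ)) (fun _ => ((0:ℝ), (1:ℝ)))
          = fderiv ℝ τ (x, 0) ((0:ℝ), (1:ℝ)) := by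
        rw [hgeq' _ (by exact hx), iteratedFDeriv_one_apply]
      have hGσ : ∀ w : ℝ × ℝ, G (x, x) (fun _ => w) = fderiv ℝ σ (x, x) w := by
        intro w
        rw [hGeq _ hxx, iteratedFDerivWithin_of_isOpen 1 isOpen_interior hxx,
          iteratedFDeriv_one_apply]
      rw [hGσ, hgτ]
      exact happ
    -- now take the limit x → 0⁺
    have h00W : ((0:ℝ), (0:ℝ)) ∈ W := hdiag 0 le_rfl
    have t1 : Tendsto (fun x : ℝ => g (x, 0)) (𝓝[>] (0:ℝ)) (𝓝 (g ((0:ℝ), (0:ℝ)))) := by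
      have hcw : Tendsto g (𝓝[innerTangent] ((0:ℝ), (0:ℝ))) (𝓝 (g ((0:ℝ), (0:ℝ)))) :=
        hgc _ origin_mem_innerTangent
      refine hcw.comp ?_
      apply tendsto_nhdsWithin_of_tendsto_nhds_of_eventually_within
      · exact ((continuous_id.prodMk continuous_const).tendsto (0:ℝ)).mono_left
          nhdsWithin_le_nhds
      · filter_upwards [self_mem_nhdsWithin] with x hx
        exact mem_innerTangent_of_pos hx
    have tc : Tendsto (fun x : ℝ => g (x, 0) (fun _ => ((0:ℝ), (1:ℝ)))) (𝓝[>] (0:ℝ)) (𝓝 a) := by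
      have := ((ContinuousMultilinearMap.apply ℝ (fun _ : Fin 1 => ℝ × ℝ) ℝ
          (fun _ => ((0:ℝ), (1:ℝ)))).continuous.tendsto _).comp t1
      exact this
    have tw : Tendsto (fun x : ℝ => ((g (x, 0) (fun _ => ((0:ℝ), (1:ℝ))), 0) : ℝ × ℝ))
        (𝓝[>] (0:ℝ)) (𝓝 (((0:ℝ), (0:ℝ)) : ℝ × ℝ)) := by
      rw [ha] at tc
      exact tc.prodMk_nhds tendsto_const_nhds
    have t2 : Tendsto (fun x : ℝ => G (x, x)) (𝓝[>] (0:ℝ)) (𝓝 (G ((0:ℝ), (0:ℝ)))) := by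
      have hcw : Tendsto G (𝓝[W] ((0:ℝ), (0:ℝ))) (𝓝 (G ((0:ℝ), (0:ℝ)))) := hGc _ h00W
      refine hcw.comp ?_
      apply tendsto_nhdsWithin_of_tendsto_nhds_of_eventually_within
      · exact ((continuous_id.prodMk continuous_id).tendsto (0:ℝ)).mono_left nhdsWithin_le_nhds
      · filter_upwards [self_mem_nhdsWithin] with x hx
        exact hdiag x hx.le
    set e : ((ContinuousMultilinearMap ℝ (fun _ : Fin 1 => ℝ × ℝ) (ℝ × ℝ)))
        → ((ℝ × ℝ) →L[ℝ] (ℝ × ℝ)) := ⇑(continuousMultilinearCurryFin1 ℝ (ℝ × ℝ) (ℝ × ℝ))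
      with hedef
    have he : Continuous e := (continuousMultilinearCurryFin1 ℝ (ℝ × ℝ) (ℝ × ℝ)).continuous
    have tL : Tendsto (fun x : ℝ => e (G (x, x))) (𝓝[>] (0:ℝ)) (𝓝 (e (G ((0:ℝ), (0:ℝ))))) :=
      (he.tendsto _).comp t2
    have tfinal : Tendsto
        (fun x : ℝ => e (G (x, x)) ((g (x, 0) (fun _ => ((0:ℝ), (1:ℝ))), 0) : ℝ × ℝ))
        (𝓝[>] (0:ℝ)) (𝓝 (e (G ((0:ℝ), (0:ℝ))) (((0:ℝ), (0:ℝ)) : ℝ × ℝ))) :=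
      (isBoundedBilinearMap_apply.continuous.tendsto _).comp (tL.prodMk_nhds tw)
    have heq : ∀ᶠ x in 𝓝[>] (0:ℝ),
        e (G (x, x)) ((g (x, 0) (fun _ => ((0:ℝ), (1:ℝ))), 0) : ℝ × ℝ) = ((0:ℝ), (1:ℝ)) := by
      filter_upwards [self_mem_nhdsWithin] with x hx
      rw [hedef]
      rw [continuousMultilinearCurryFin1_apply, fin1_const]
      exact key x hx
    have hconst : Tendsto
        (fun x : ℝ => e (G (x, x)) ((g (x, 0) (fun _ => ((0:ℝ), (1:ℝ))), 0) : ℝ × ℝ))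
        (𝓝[>] (0:ℝ)) (𝓝 (((0:ℝ), (1:ℝ)) : ℝ × ℝ)) :=
      Tendsto.congr' (EventuallyEq.symm heq) tendsto_const_nhds
    have hlim : e (G ((0:ℝ), (0:ℝ))) (((0:ℝ), (0:ℝ)) : ℝ × ℝ) = ((0:ℝ), (1:ℝ)) :=
      tendsto_nhds_unique tfinal hconst
    have hzero' : e (G (((0:ℝ), (0:ℝ)) : ℝ × ℝ)) (((0:ℝ), (0:ℝ)) : ℝ × ℝ) = (0 : ℝ × ℝ) :=
      map_zero _
    rw [hzero'] at hlim
    exact zero_ne_one (congrArg Prod.snd hlim)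
  · -- a > 0 : go inward along v = (1, -θ) with θ large
    set θ : ℝ := (bb + 1) / a with hθdef
    have hvec : ((1, -θ) : ℝ × ℝ) = (-θ) • ((0:ℝ), (1:ℝ)) + ((1:ℝ), (0:ℝ)) := by
      simp [Prod.ext_iff]
    have hval : g ((0:ℝ), (0:ℝ)) (fun _ => ((1, -θ) : ℝ × ℝ)) = -θ * a + bb := by
      rw [hvec, eval1_linear, smul_eq_mul, ← hadef, ← hbbdef]
    have hcalc : -θ * a + bb = -1 := by
      rw [hθdef]
      field_simp
      ring
    have hneg : g ((0:ℝ), (0:ℝ)) (fun _ => ((1, -θ) : ℝ × ℝ)) < 0 := by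
      rw [hval, hcalc]; norm_num
    exact hray ((1, -θ) : ℝ × ℝ) one_pos hneg
end

section
/- Let E be a finite-dimensional real vector space, M ⊆ E a convex polytope with nonempty interior, and f : M → E a C¹ stratified vector field (f(x) ∈ E(x) := span(M(x)−x) for all x, where M(x) is the smallest face containing x) with sup_{x∈M} ‖f'(x)‖_op < 1. Then φ := id_M + f is a face-respecting homeomorphism of M: φ is a bijection of M onto M with continuous inverse, and φ(F) = F for every face F of M. -/
open Set

/-!
Since `‖f'‖ ≤ c < 1` on the convex set `M`, `f` is `c`-Lipschitz, so `φ = id + f` satisfies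
`(1 - c) ‖x - y‖ ≤ ‖φ x - φ y‖`: it is injective, with a Lipschitz inverse on its image.

Invariance of the faces holds for every compact convex `F` and every `c`-Lipschitz `f` tangent
to the faces of `F`, by induction on the dimension of `F`. Each relative boundary point of `F`
lies in a proper exposed face, of smaller dimension, so by induction every `x ↦ x + t • f x`
(`0 ≤ t ≤ 1`) maps these faces, hence the relative boundary, onto themselves. These maps being
injective, the path `t ↦ x + t • f x` from a relative interior point never meets the relative
boundary, so `φ` maps the relative interior into itself. There the image of `φ` is relatively open
by Banach's fixed point theorem and relatively closed by compactness, so by connectedness `φ`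
maps the relative interior onto itself. A face other than `F` misses the relative interior, so
it is covered by its intersections with the proper exposed faces, which are faces of those.
-/

open Set Filter Topology Metric Module
open scoped NNReal

theorem IsPreconnected.subset_of_mem_nhdsWithin {X : Type*} [TopologicalSpace X]
    {S A U C : Set X} (hS : IsPreconnected S) (hSA : S ⊆ A) (hU : ∀ z ∈ U, U ∈ 𝓝[A] z)
    (hC : IsClosed C) (hUC : U ⊆ C) (hSC : S ∩ C ⊆ U) (hne : (S ∩ U).Nonempty) : S ⊆ U := by
  have hmem : ∀ z ∈ A, z ∈ interior (Aᶜ ∪ U) → z ∈ U := fun z hzA hz =>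
    (interior_subset hz).resolve_left (not_not_intro hzA)
  have hcover : S ⊆ interior (Aᶜ ∪ U) ∪ Cᶜ := by
    intro z hz
    by_cases hzC : z ∈ C
    · exact Or.inl (mem_interior_iff_mem_nhds.2 <|
        (mem_nhdsWithin_iff_eventually.1 (hU z (hSC ⟨hz, hzC⟩))).mono fun _ => imp_iff_not_or.1)
    · exact Or.inr hzC
  have hdisj : S ∩ (interior (Aᶜ ∪ U) ∩ Cᶜ) = ∅ :=
    eq_empty_of_forall_notMem fun z ⟨hzS, hzU, hzC⟩ => hzC (hUC (hmem z (hSA hzS) hzU))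
  rcases isPreconnected_iff_subset_of_disjoint.1 hS _ _ isOpen_interior hC.isOpen_compl hcover hdisj
    with h | h
  · exact fun z hz => hmem z (hSA hz) (h hz)
  · obtain ⟨z, hzS, hzU⟩ := hne
    exact absurd (hUC hzU) (h hzS)

theorem Set.image_eq_self_of_forall_exists_image_eq_self {α : Type*} {φ : α → α} {s : Set α}
    (h : ∀ x ∈ s, ∃ t ⊆ s, x ∈ t ∧ φ '' t = t) : φ '' s = s := by
  refine Subset.antisymm (image_subset_iff.2 fun x hx => ?_) fun x hx => ?_
  · obtain ⟨t, hts, hxt, ht⟩ := h x hx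
    exact hts (ht ▸ mem_image_of_mem φ hxt)
  · obtain ⟨t, hts, hxt, ht⟩ := h x hx
    exact image_mono hts (ht.symm ▸ hxt)

section IntrinsicInterior

variable {𝕜 V P : Type*} [Ring 𝕜] [AddCommGroup V] [Module 𝕜 V] [TopologicalSpace P]
  [AddTorsor V P] {s : Set P} {x : P}

theorem mem_intrinsicInterior_iff_mem_nhdsWithin :
    x ∈ intrinsicInterior 𝕜 s ↔ x ∈ affineSpan 𝕜 s ∧ s ∈ 𝓝[affineSpan 𝕜 s] x := by
  constructor
  · rintro ⟨y, hy, rfl⟩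
    exact ⟨y.2, mem_of_superset (mem_nhds_subtype_iff_nhdsWithin.1 (mem_interior_iff_mem_nhds.1 hy))
      (image_preimage_subset _ _)⟩
  · rintro ⟨hx, hs⟩
    refine ⟨⟨x, hx⟩, mem_interior_iff_mem_nhds.2 (mem_nhds_subtype_iff_nhdsWithin.2 ?_), rfl⟩
    exact mem_of_superset (inter_mem hs self_mem_nhdsWithin) fun y hy => ⟨⟨y, hy.2⟩, hy.1, rfl⟩

theorem intrinsicInterior_mem_nhdsWithin (hx : x ∈ intrinsicInterior 𝕜 s) :
    intrinsicInterior 𝕜 s ∈ 𝓝[affineSpan 𝕜 s] x := by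
  obtain ⟨y, hy, rfl⟩ := hx
  exact mem_nhds_subtype_iff_nhdsWithin.1 (isOpen_interior.mem_nhds hy)

end IntrinsicInterior

section ConvexGeometry

variable {E : Type*} [NormedAddCommGroup E] [NormedSpace ℝ E] {F G : Set E} {x : E}

protected theorem Convex.intrinsicInterior (hF : Convex ℝ F) :
    Convex ℝ (intrinsicInterior ℝ F) := by
  intro a ha b hb p q hp hq hpq
  rw [mem_intrinsicInterior_iff_mem_nhdsWithin] at ha hb ⊢
  set A := affineSpan ℝ F
  have hz : p • a + q • b ∈ A := A.convex ha.1 hb.1 hp hq hpq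
  have htranslate : ∀ w ∈ A,
      Tendsto (fun y => y - (p • a + q • b) + w) (𝓝[A] (p • a + q • b)) (𝓝[A] w) := by
    intro w hw
    refine tendsto_nhdsWithin_iff.2 ⟨?_, eventually_nhdsWithin_of_forall fun y hy => ?_⟩
    · have : Continuous fun y => y - (p • a + q • b) + w := by fun_prop
      simpa using (this.tendsto (p • a + q • b)).mono_left nhdsWithin_le_nhds
    · simpa [vadd_eq_add, add_comm] using
        AffineSubspace.vadd_mem_of_mem_direction (A.vsub_mem_direction hy hz) hw
  refine ⟨hz, ?_⟩
  filter_upwards [(htranslate a ha.1).eventually_mem ha.2,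
    (htranslate b hb.1).eventually_mem hb.2] with y hya hyb
  convert hF hya hyb hp hq hpq using 1
  linear_combination (norm := module) -hpq • (y - (p • a + q • b))

theorem IsExtreme.subset_of_mem_intrinsicInterior (hG : IsExtreme ℝ F G) (hxG : x ∈ G)
    (hx : x ∈ intrinsicInterior ℝ F) : F ⊆ G := by
  intro w hw
  obtain ⟨hxA, hF⟩ := mem_intrinsicInterior_iff_mem_nhdsWithin.1 hx
  have hlim : Tendsto (fun η : ℝ => x + η • (x - w)) (𝓝[>] 0) (𝓝[affineSpan ℝ F] x) := by
    refine tendsto_nhdsWithin_iff.2 ⟨?_, Eventually.of_forall fun η => ?_⟩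
    · have : Continuous fun η : ℝ => x + η • (x - w) := by fun_prop
      simpa using (this.tendsto 0).mono_left nhdsWithin_le_nhds
    · simpa [vadd_eq_add, add_comm] using AffineSubspace.vadd_mem_of_mem_direction
        (Submodule.smul_mem _ η (AffineSubspace.vsub_mem_direction hxA
          (subset_affineSpan ℝ F hw))) hxA
  obtain ⟨η, hηF, hη : 0 < η⟩ := ((hlim.eventually_mem hF).and self_mem_nhdsWithin).exists
  -- `x` divides the segment from `w` to `x + η • (x - w)` in the ratio `η : 1`
  refine hG.2 hw hηF hxG
    ⟨η / (1 + η), 1 / (1 + η), by positivity, by positivity, by field_simp; ring, ?_⟩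
  match_scalars <;> field_simp
  ring

theorem finrank_vectorSpan_lt [FiniteDimensional ℝ E] (hGF : G ⊆ F) (hG : Convex ℝ G)
    (hGne : G.Nonempty) (hdisj : Disjoint G (intrinsicInterior ℝ F)) :
    finrank ℝ (vectorSpan ℝ G) < finrank ℝ (vectorSpan ℝ F) := by
  refine (Submodule.finrank_mono (vectorSpan_mono ℝ hGF)).lt_of_ne fun heq => ?_
  obtain ⟨x, hx⟩ := hGne
  have hspan : affineSpan ℝ G = affineSpan ℝ F := by
    refine AffineSubspace.ext_of_direction_eq ?_
      ⟨x, subset_affineSpan ℝ G hx, subset_affineSpan ℝ F (hGF hx)⟩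
    simpa only [direction_affineSpan] using
      Submodule.eq_of_le_of_finrank_eq (vectorSpan_mono ℝ hGF) heq
  obtain ⟨z, hz⟩ := Set.Nonempty.intrinsicInterior hG ⟨x, hx⟩
  have hzF : z ∈ intrinsicInterior ℝ F := by
    rw [mem_intrinsicInterior_iff_mem_nhdsWithin, hspan] at hz
    exact mem_intrinsicInterior_iff_mem_nhdsWithin.2 ⟨hz.1, mem_of_superset hz.2 hGF⟩
  exact hdisj.ne_of_mem (intrinsicInterior_subset hz) hzF rfl

end ConvexGeometry

section Separation

variable {E : Type*} [NormedAddCommGroup E] [NormedSpace ℝ E] {F : Set E} {x : E}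

theorem mem_interior_preimage_add_iff (hx : x ∈ affineSpan ℝ F)
    (w : (affineSpan ℝ F).direction) :
    w ∈ interior ((fun v : (affineSpan ℝ F).direction => x + (v : E)) ⁻¹' F) ↔
      x + w ∈ intrinsicInterior ℝ F := by
  have hind : IsInducing fun v : (affineSpan ℝ F).direction => x + (v : E) :=
    (Homeomorph.addLeft x).isInducing.comp IsInducing.subtypeVal
  have hrange : range (fun v : (affineSpan ℝ F).direction => x + (v : E)) = affineSpan ℝ F := by
    ext y
    rw [SetLike.mem_coe, ← AffineSubspace.vsub_right_mem_direction_iff_mem hx]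
    exact ⟨by rintro ⟨v, rfl⟩; simp, fun hy => ⟨⟨y - x, hy⟩, by simp⟩⟩
  have hwA : x + (w : E) ∈ affineSpan ℝ F := by
    simpa [vadd_eq_add, add_comm] using AffineSubspace.vadd_mem_of_mem_direction w.2 hx
  rw [mem_interior_iff_mem_nhds, ← Filter.mem_map, hind.map_nhds_eq, hrange,
    mem_intrinsicInterior_iff_mem_nhdsWithin, and_iff_right hwA]

variable [FiniteDimensional ℝ E]

theorem exists_dual_of_notMem_intrinsicInterior (hF : Convex ℝ F) (hx : x ∈ F)
    (hx' : x ∉ intrinsicInterior ℝ F) :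
    ∃ ℓ : E →L[ℝ] ℝ, (∀ y ∈ F, ℓ y ≤ ℓ x) ∧ ∀ z ∈ intrinsicInterior ℝ F, ℓ z < ℓ x := by
  have hxA : x ∈ affineSpan ℝ F := subset_affineSpan ℝ F hx
  have hdir : ∀ y ∈ F, y - x ∈ (affineSpan ℝ F).direction := fun y hy =>
    AffineSubspace.vsub_mem_direction (subset_affineSpan ℝ F hy) hxA
  set s := (fun v : (affineSpan ℝ F).direction => x + (v : E)) ⁻¹' F
  have hs : Convex ℝ s :=
    (hF.translate_preimage_right x).linear_preimage (affineSpan ℝ F).direction.subtype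
  have hint : ∀ z (hz : z ∈ intrinsicInterior ℝ F), (⟨z - x, hdir z (intrinsicInterior_subset hz)⟩ :
      (affineSpan ℝ F).direction) ∈ interior s :=
    fun z hz => (mem_interior_preimage_add_iff hxA _).2 (by simpa using hz)
  have h0 : (0 : (affineSpan ℝ F).direction) ∉ interior s := by
    rwa [mem_interior_preimage_add_iff hxA, ZeroMemClass.coe_zero, add_zero]
  obtain ⟨ℓ₀, hℓ₀⟩ := geometric_hahn_banach_open_point hs.interior isOpen_interior h0
  rw [map_zero] at hℓ₀
  have hle : ∀ v ∈ s, ℓ₀ v ≤ 0 := by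
    obtain ⟨z, hz⟩ := Set.Nonempty.intrinsicInterior hF ⟨x, hx⟩
    have hcl : s ⊆ closure (interior s) := by
      rw [hs.closure_interior_eq_closure_of_nonempty_interior ⟨_, hint z hz⟩]
      exact subset_closure
    exact fun v hv => closure_minimal (fun w hw => (hℓ₀ w hw).le)
      (isClosed_le ℓ₀.continuous continuous_const) (hcl hv)
  obtain ⟨ℓ, hℓ⟩ := LinearMap.exists_extend ℓ₀.toLinearMap
  have hℓx : ∀ y (hy : y - x ∈ (affineSpan ℝ F).direction), ℓ y - ℓ x = ℓ₀ ⟨y - x, hy⟩ :=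
    fun y hy => by rw [← map_sub]; exact LinearMap.congr_fun hℓ ⟨y - x, hy⟩
  refine ⟨LinearMap.toContinuousLinearMap ℓ, fun y hy => ?_, fun z hz => ?_⟩
  · have h1 := hℓx y (hdir y hy)
    have h2 := hle ⟨y - x, hdir y hy⟩ (show x + (y - x) ∈ F by simpa using hy)
    simp only [LinearMap.coe_toContinuousLinearMap']
    linarith
  · have h1 := hℓx z (hdir z (intrinsicInterior_subset hz))
    have h2 := hℓ₀ _ (hint z hz)
    simp only [LinearMap.coe_toContinuousLinearMap']
    linarith

theorem exists_isExposed_of_notMem_intrinsicInterior (hF : Convex ℝ F) (hx : x ∈ F)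
    (hx' : x ∉ intrinsicInterior ℝ F) :
    ∃ G, IsExposed ℝ F G ∧ x ∈ G ∧ Disjoint G (intrinsicInterior ℝ F) := by
  obtain ⟨ℓ, hle, hlt⟩ := exists_dual_of_notMem_intrinsicInterior hF hx hx'
  exact ⟨ℓ.toExposed F, ContinuousLinearMap.toExposed.isExposed, ⟨hx, hle⟩,
    disjoint_left.2 fun z hz hzi => (hlt z hzi).not_ge (hz.2 x hx)⟩

end Separation

section Lipschitz

variable {E : Type*} [NormedAddCommGroup E] {s : Set E} {g : E → E} {c : ℝ≥0}

theorem LipschitzOnWith.antilipschitzWith_add (hg : LipschitzOnWith c g s) (hc : c < 1) :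
    AntilipschitzWith (1 - c)⁻¹ (s.domRestrict fun x => x + g x) := by
  have := (AntilipschitzWith.subtype_coe s).add_lipschitzWith hg.to_restrict (by simpa using hc)
  rwa [inv_one] at this

theorem LipschitzOnWith.injOn_add (hg : LipschitzOnWith c g s) (hc : c < 1) :
    InjOn (fun x => x + g x) s :=
  injOn_iff_injective.2 (hg.antilipschitzWith_add hc).injective

variable [NormedSpace ℝ E]

theorem LipschitzOnWith.smul_of_mem_Icc (hg : LipschitzOnWith c g s) {t : ℝ}
    (ht : t ∈ Icc (0 : ℝ) 1) : LipschitzOnWith c (fun x => t • g x) s := by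
  refine ((lipschitzWith_smul t).comp_lipschitzOnWith hg).weaken (mul_le_of_le_one_left c.2 ?_)
  rw [← NNReal.coe_le_coe, coe_nnnorm, Real.norm_of_nonneg ht.1]
  exact ht.2

variable [FiniteDimensional ℝ E] {A : AffineSubspace ℝ E} {x₀ : E}

theorem exists_add_eq_of_lipschitzOnWith (hc : c < 1) (hx₀ : x₀ ∈ A) {r : ℝ}
    (hg : LipschitzOnWith c g (A ∩ closedBall x₀ r))
    (hgA : ∀ x ∈ (A : Set E) ∩ closedBall x₀ r, g x ∈ A.direction) {y : E} (hy : y ∈ A)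
    (hyr : dist y (x₀ + g x₀) ≤ (1 - c) * r) :
    ∃ x ∈ (A : Set E) ∩ closedBall x₀ r, x + g x = y := by
  set K := (A : Set E) ∩ closedBall x₀ r
  have hr : 0 ≤ r := nonneg_of_mul_nonneg_right (dist_nonneg.trans hyr)
    (sub_pos.2 (by exact_mod_cast hc))
  have hx₀K : x₀ ∈ K := ⟨hx₀, mem_closedBall_self hr⟩
  have hK : IsComplete K := (A.closed_of_finiteDimensional.inter isClosed_closedBall).isComplete
  have hdist : ∀ x ∈ K, dist (g x₀) (g x) ≤ c * r := fun x hx =>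
    (hg.dist_le_mul x₀ hx₀K x hx).trans <|
      mul_le_mul_of_nonneg_left (dist_comm x x₀ ▸ hx.2) c.2
  have hmaps : MapsTo (fun x => y - g x) K K := by
    intro x hx
    refine ⟨by simpa [vadd_eq_add, sub_eq_neg_add] using
      AffineSubspace.vadd_mem_of_mem_direction (neg_mem (hgA x hx)) hy, ?_⟩
    rw [mem_closedBall]
    calc dist (y - g x) x₀ = ‖(y - (x₀ + g x₀)) + (g x₀ - g x)‖ := by
          rw [dist_eq_norm]; congr 1; abel
      _ ≤ dist y (x₀ + g x₀) + dist (g x₀) (g x) := by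
          rw [dist_eq_norm, dist_eq_norm]; exact norm_add_le _ _
      _ ≤ (1 - c) * r + c * r := add_le_add hyr (hdist x hx)
      _ = r := by ring
  have hcontr : ContractingWith c (hmaps.restrict _ K K) :=
    ⟨hc, LipschitzWith.of_dist_le_mul fun a b => by
      rw [Subtype.dist_eq, MapsTo.val_restrict_apply, MapsTo.val_restrict_apply, dist_sub_left]
      exact hg.dist_le_mul a a.2 b b.2⟩
  obtain ⟨x, hxK, hfix, -⟩ := hcontr.exists_fixedPoint' hK hmaps hx₀K (edist_ne_top _ _)
  exact ⟨x, hxK, eq_sub_iff_add_eq.1 hfix.eq.symm⟩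

theorem image_add_mem_nhdsWithin (hc : c < 1) (hx₀ : x₀ ∈ A) (hs : s ∈ 𝓝[A] x₀)
    (hg : LipschitzOnWith c g s) (hgA : ∀ x ∈ s, g x ∈ A.direction) :
    (fun x => x + g x) '' s ∈ 𝓝[A] (x₀ + g x₀) := by
  obtain ⟨ε, hε, hball⟩ := Metric.mem_nhdsWithin_iff.1 hs
  have hK : (A : Set E) ∩ closedBall x₀ (ε / 2) ⊆ s := fun x hx =>
    hball ⟨closedBall_subset_ball (half_lt_self hε) hx.2, hx.1⟩
  have hc' : (0 : ℝ) < 1 - c := sub_pos.2 (by exact_mod_cast hc)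
  refine Metric.mem_nhdsWithin_iff.2 ⟨(1 - c) * (ε / 2), by positivity, fun y ⟨hy, hyA⟩ => ?_⟩
  obtain ⟨x, hx, rfl⟩ := exists_add_eq_of_lipschitzOnWith hc hx₀ (hg.mono hK)
    (fun x hx => hgA x (hK hx)) hyA (mem_ball.1 hy).le
  exact mem_image_of_mem _ (hK hx)

end Lipschitz

section Faces

variable {E : Type*} [NormedAddCommGroup E] [NormedSpace ℝ E] {F G : Set E} {f : E → E}
  {c : ℝ≥0}

/-- The paper's stratification condition `f x ∈ E(x)`, phrased through all faces containing `x`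
rather than the smallest one. -/
def IsTangentToFaces (F : Set E) (f : E → E) : Prop :=
  ∀ G, Convex ℝ G → IsExtreme ℝ F G → ∀ x ∈ G, f x ∈ vectorSpan ℝ G

theorem IsTangentToFaces.mono (hf : IsTangentToFaces F f) (hG : IsExtreme ℝ F G) :
    IsTangentToFaces G f :=
  fun H hHc hH => hf H hHc (hG.trans hH)

theorem IsTangentToFaces.const_smul (hf : IsTangentToFaces F f) (t : ℝ) :
    IsTangentToFaces F fun x => t • f x :=
  fun G hGc hG x hx => Submodule.smul_mem _ t (hf G hGc hG x hx)

theorem IsTangentToFaces.mem_vectorSpan (hf : IsTangentToFaces F f) (hF : Convex ℝ F) {x : E}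
    (hx : x ∈ F) : f x ∈ vectorSpan ℝ F :=
  hf F hF IsExtreme.rfl x hx

theorem add_mem_intrinsicInterior (hF : IsClosed F) (hfA : ∀ x ∈ F, f x ∈ vectorSpan ℝ F)
    (hinj : ∀ t ∈ Icc (0 : ℝ) 1, InjOn (fun x => x + t • f x) F)
    (hbd : ∀ t ∈ Icc (0 : ℝ) 1,
      F \ intrinsicInterior ℝ F ⊆ (fun x => x + t • f x) '' (F \ intrinsicInterior ℝ F))
    {x : E} (hx : x ∈ intrinsicInterior ℝ F) : x + f x ∈ intrinsicInterior ℝ F := by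
  have hxF : x ∈ F := intrinsicInterior_subset hx
  -- the path `t ↦ x + t • f x` cannot meet the relative boundary
  have hseg : (fun t : ℝ => x + t • f x) '' Icc 0 1 ⊆ intrinsicInterior ℝ F := by
    refine (isPreconnected_Icc.image _ (by fun_prop)).subset_of_mem_nhdsWithin
      (A := affineSpan ℝ F) ?_ (fun z hz => intrinsicInterior_mem_nhdsWithin hz) hF
      intrinsicInterior_subset ?_ ⟨x, ⟨0, left_mem_Icc.2 zero_le_one, by simp⟩, hx⟩
    · rintro _ ⟨t, -, rfl⟩
      simpa [vadd_eq_add, add_comm] using AffineSubspace.vadd_mem_of_mem_direction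
        (Submodule.smul_mem _ t ((direction_affineSpan ℝ F).symm ▸ hfA x hxF))
        (subset_affineSpan ℝ F hxF)
    · rintro _ ⟨⟨t, ht, rfl⟩, htF⟩
      by_contra hni
      obtain ⟨y, hy, hyx⟩ := hbd t ht ⟨htF, hni⟩
      exact hy.2 (hinj t ht hy.1 hxF hyx ▸ hx)
  simpa using hseg ⟨1, right_mem_Icc.2 zero_le_one, rfl⟩

variable [FiniteDimensional ℝ E]

theorem image_add_eq_self_of_image_sdiff_intrinsicInterior (hc : c < 1) (hFc : IsCompact F)
    (hFv : Convex ℝ F) (hf : LipschitzOnWith c f F) (hfA : ∀ x ∈ F, f x ∈ vectorSpan ℝ F)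
    (hbd : ∀ t ∈ Icc (0 : ℝ) 1,
      (fun x => x + t • f x) '' (F \ intrinsicInterior ℝ F) = F \ intrinsicInterior ℝ F) :
    (fun x => x + f x) '' F = F := by
  set φ := fun x => x + f x
  have hrel : ∀ x ∈ intrinsicInterior ℝ F, φ x ∈ intrinsicInterior ℝ F :=
    fun x hx => add_mem_intrinsicInterior hFc.isClosed hfA
      (fun t ht => (hf.smul_of_mem_Icc ht).injOn_add hc) (fun t ht => (hbd t ht).superset) hx
  have hbd₁ : φ '' (F \ intrinsicInterior ℝ F) = F \ intrinsicInterior ℝ F := by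
    simpa using hbd 1 (right_mem_Icc.2 zero_le_one)
  -- `φ '' intrinsicInterior ℝ F` is relatively open (Banach) and closed (compactness) in the
  -- connected set `intrinsicInterior ℝ F`
  have honto : intrinsicInterior ℝ F ⊆ φ '' intrinsicInterior ℝ F := by
    rcases (intrinsicInterior ℝ F).eq_empty_or_nonempty with hempty | ⟨x₀, hx₀⟩
    · simp [hempty]
    refine hFv.intrinsicInterior.isPreconnected.subset_of_mem_nhdsWithin
      (intrinsicInterior_subset.trans (subset_affineSpan ℝ F)) ?_
      (hFc.image_of_continuousOn (continuousOn_id.add hf.continuousOn)).isClosed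
      (image_mono intrinsicInterior_subset) ?_ ⟨φ x₀, hrel x₀ hx₀, mem_image_of_mem φ hx₀⟩
    · rintro _ ⟨x, hx, rfl⟩
      exact image_add_mem_nhdsWithin hc (subset_affineSpan ℝ F (intrinsicInterior_subset hx))
        (intrinsicInterior_mem_nhdsWithin hx) (hf.mono intrinsicInterior_subset)
        fun y hy => (direction_affineSpan ℝ F).symm ▸ hfA y (intrinsicInterior_subset hy)
    · rintro _ ⟨hy, x, hxF, rfl⟩
      refine ⟨x, ?_, rfl⟩
      by_contra hxn
      exact (hbd₁.subset (mem_image_of_mem φ ⟨hxF, hxn⟩)).2 hy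
  have hint : φ '' intrinsicInterior ℝ F = intrinsicInterior ℝ F :=
    Subset.antisymm (image_subset_iff.2 hrel) honto
  have hF : intrinsicInterior ℝ F ∪ (F \ intrinsicInterior ℝ F) = F :=
    union_sdiff_cancel intrinsicInterior_subset
  calc φ '' F = φ '' (intrinsicInterior ℝ F ∪ (F \ intrinsicInterior ℝ F)) := by rw [hF]
    _ = F := by rw [image_union, hint, hbd₁, hF]

theorem IsTangentToFaces.image_add_eq (hs : IsTangentToFaces F f) (hc : c < 1)
    (hFc : IsCompact F) (hFv : Convex ℝ F) (hf : LipschitzOnWith c f F)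
    (hG : IsExtreme ℝ F G) : (fun x => x + f x) '' G = G := by
  obtain ⟨d, hd⟩ : ∃ d, finrank ℝ (vectorSpan ℝ F) = d := ⟨_, rfl⟩
  induction d using Nat.strong_induction_on generalizing F f G with
  | _ d ih =>
  have hface : ∀ x ∈ F \ intrinsicInterior ℝ F, ∃ H, IsExtreme ℝ F H ∧
      H ⊆ F \ intrinsicInterior ℝ F ∧ x ∈ H ∧ ∀ t ∈ Icc (0 : ℝ) 1, ∀ G', IsExtreme ℝ H G' →
        (fun y => y + t • f y) '' G' = G' := by
    rintro x ⟨hxF, hx⟩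
    obtain ⟨H, hH, hxH, hdisj⟩ := exists_isExposed_of_notMem_intrinsicInterior hFv hxF hx
    refine ⟨H, hH.isExtreme, subset_sdiff.2 ⟨hH.subset, hdisj⟩, hxH, fun t ht G' hG' => ?_⟩
    exact ih _ (hd ▸ finrank_vectorSpan_lt hH.subset (hH.convex hFv) ⟨x, hxH⟩ hdisj)
      ((hs.const_smul t).mono hH.isExtreme) (hH.isCompact hFc) (hH.convex hFv)
      ((hf.smul_of_mem_Icc ht).mono hH.subset) hG' rfl
  rcases (G ∩ intrinsicInterior ℝ F).eq_empty_or_nonempty with hGr | ⟨x, hxG, hxr⟩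
  · refine Set.image_eq_self_of_forall_exists_image_eq_self fun x hxG => ?_
    have hx : x ∈ F \ intrinsicInterior ℝ F :=
      ⟨hG.subset hxG, fun hxr => hGr.subset ⟨hxG, hxr⟩⟩
    obtain ⟨H, hH, hHsub, hxH, hinv⟩ := hface x hx
    refine ⟨G ∩ H, inter_subset_left, ⟨hxG, hxH⟩, ?_⟩
    simpa using hinv 1 (right_mem_Icc.2 zero_le_one) (G ∩ H)
      ((hG.inter hH).mono hH.subset inter_subset_right)
  · obtain rfl : G = F := hG.subset.antisymm (hG.subset_of_mem_intrinsicInterior hxG hxr)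
    refine image_add_eq_self_of_image_sdiff_intrinsicInterior hc hFc hFv hf
      (fun x hx => hs.mem_vectorSpan hFv hx)
      fun t ht => Set.image_eq_self_of_forall_exists_image_eq_self fun x hx => ?_
    obtain ⟨H, -, hHsub, hxH, hinv⟩ := hface x hx
    exact ⟨H, hHsub, hxH, hinv t ht H IsExtreme.rfl⟩

end Faces

theorem spanAt_le_vectorSpan {n : ℕ} {M G : Set (Fin n → ℝ)} (hG : IsFaceOf n M G)
    {x : Fin n → ℝ} (hx : x ∈ G) : spanAt n M x ≤ vectorSpan ℝ G :=
  Submodule.span_le.2 <| by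
    rintro _ ⟨y, hy, rfl⟩
    exact vsub_mem_vectorSpan ℝ
      (sInter_subset_of_mem (show G ∈ {F | IsFaceOf n M F ∧ x ∈ F} from ⟨hG, hx⟩) hy) hx

theorem isTangentToFaces_of_mem_spanAt {n : ℕ} {M : Set (Fin n → ℝ)}
    {f : (Fin n → ℝ) → (Fin n → ℝ)} (hf : ∀ x ∈ M, f x ∈ spanAt n M x) :
    IsTangentToFaces M f :=
  fun _ hGc hG x hx => spanAt_le_vectorSpan ⟨hGc, hG⟩ hx (hf x (hG.subset hx))

theorem Convex.lipschitzOnWith_of_hasFDerivAt_interior {E E' : Type*} [NormedAddCommGroup E]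
    [NormedSpace ℝ E] [NormedAddCommGroup E'] [NormedSpace ℝ E'] {M : Set E} {f : E → E'}
    {f' : E → E →L[ℝ] E'} {c : ℝ≥0} (hM : Convex ℝ M)
    (hMcl : IsClosed M) (hMi : (interior M).Nonempty) (hcont : ContinuousOn f M)
    (hderiv : ∀ x ∈ interior M, HasFDerivAt f (f' x) x) (hbound : ∀ x ∈ interior M, ‖f' x‖₊ ≤ c) :
    LipschitzOnWith c f M := by
  have hcl : closure (interior M) = M := by
    rw [hM.closure_interior_eq_closure_of_nonempty_interior hMi, hMcl.closure_eq]
  rw [← hcl] at hcont ⊢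
  exact (hM.interior.lipschitzOnWith_of_nnnorm_hasFDerivWithin_le
    (fun x hx => (hderiv x hx).hasFDerivWithinAt) hbound).closure hcont

theorem stratified_contraction_is_face_respecting_homeo_general {n : ℕ} (M : Set (Fin n → ℝ))
    (hM : IsPolytope n M) (hMi : (interior M).Nonempty)
    (f : (Fin n → ℝ) → (Fin n → ℝ)) (f' : (Fin n → ℝ) → ((Fin n → ℝ) →L[ℝ] (Fin n → ℝ)))
    (hcont : ContinuousOn f M)
    (hderiv : ∀ x ∈ interior M, HasFDerivAt f (f' x) x)
    (hsmall : ∃ c : ℝ, c < 1 ∧ ∀ x ∈ M, ‖f' x‖ ≤ c)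
    (hstr : ∀ x ∈ M, f x ∈ spanAt n M x) :
    Set.BijOn (fun x => x + f x) M M ∧
    (∃ ψ : (Fin n → ℝ) → (Fin n → ℝ),
        Set.InvOn ψ (fun x => x + f x) M M ∧ ContinuousOn ψ M) ∧
    (∀ F, IsFaceOf n M F → (fun x => x + f x) '' F = F) := by
  obtain ⟨S, hS⟩ := hM
  have hMv : Convex ℝ M := hS ▸ convex_convexHull ℝ _
  have hMc : IsCompact M := hS ▸ S.finite_toSet.isCompact_convexHull (𝕜 := ℝ)
  obtain ⟨c, hc1, hbound⟩ := hsmall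
  have hc : c.toNNReal < 1 := Real.toNNReal_lt_one.2 hc1
  have hlip : LipschitzOnWith c.toNNReal f M :=
    hMv.lipschitzOnWith_of_hasFDerivAt_interior hMc.isClosed hMi hcont hderiv fun x hx => by
      simpa using Real.toNNReal_le_toNNReal (hbound x (interior_subset hx))
  have hface : ∀ F, IsFaceOf n M F → (fun x => x + f x) '' F = F :=
    fun F hF => (isTangentToFaces_of_mem_spanAt hstr).image_add_eq hc hMc hMv hlip hF.2
  have hself := hface M ⟨hMv, IsExtreme.rfl⟩
  have hbij : BijOn (fun x => x + f x) M M :=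
    ⟨mapsTo_iff_image_subset.2 hself.subset, hlip.injOn_add hc, hself.superset⟩
  refine ⟨hbij, ⟨Function.invFunOn _ M, hbij.invOn_invFunOn, ?_⟩, hface⟩
  exact continuousOn_iff_continuous_domRestrict.2 ((hlip.antilipschitzWith_add hc).to_rightInvOn'
    hbij.surjOn.mapsTo_invFunOn hbij.invOn_invFunOn.2).continuous

/-- Let `M ⊆ ℝⁿ` be a convex polytope with nonempty interior and
`f : M → ℝⁿ` a `C¹` stratified vector field (`f(x) ∈ E(x)` for all `x ∈ M`) with
`sup_{x∈M} ‖f'(x)‖ < 1`.  Then `φ := id_M + f` is a face-respecting homeomorphism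
of `M`: a bijection of `M` onto `M` with continuous inverse such that `φ(F) = F`
for every face `F` of `M`. -/
theorem stratified_contraction_is_face_respecting_homeo {n : ℕ} (M : Set (Fin n → ℝ))
    (hM : IsPolytope n M) (hMi : (interior M).Nonempty)
    (f : (Fin n → ℝ) → (Fin n → ℝ)) (f' : (Fin n → ℝ) → ((Fin n → ℝ) →L[ℝ] (Fin n → ℝ)))
    (hcont : ContinuousOn f M) (hcont' : ContinuousOn f' M)
    (hderiv : ∀ x ∈ interior M, HasFDerivAt f (f' x) x)
    (hsmall : ∃ c : ℝ, c < 1 ∧ ∀ x ∈ M, ‖f' x‖ ≤ c)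
    (hstr : ∀ x ∈ M, f x ∈ spanAt n M x) :
    Set.BijOn (fun x => x + f x) M M ∧
    (∃ ψ : (Fin n → ℝ) → (Fin n → ℝ),
        Set.InvOn ψ (fun x => x + f x) M M ∧ ContinuousOn ψ M) ∧
    (∀ F, IsFaceOf n M F → (fun x => x + f x) '' F = F) :=
  stratified_contraction_is_face_respecting_homeo_general M hM hMi f f' hcont hderiv hsmall hstr
end
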